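/- Let x, y, x', y', u, v : List α, let C : ℕ, and let I ⊆ ℕ be an infinite set. If levenshtein (x ++ u^k ++ y) (x' ++ v^k ++ y') ≤ C for every k ∈ I, then u and v are conjugate. -/

import Mathlib

/-- `wpow u k` is the k-fold concatenation `u ++ u ++ ⋯ ++ u` (k copies). -/
def wpow {α : Type*} (u : List α) (k : ℕ) : List α := (List.replicate k u).flatten

/-- Cost structure for the Levenshtein distance (removed from Mathlib; restored verbatim in meaning). -/
structure Levenshtein.Cost (α β δ : Type*) where
  delete : α → δ
  insert : β → δ
  substitute : α → β → δ

/-- The default cost structure: each insertion, deletion and substitution costs 1. -/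
def Levenshtein.defaultCost {α : Type*} [DecidableEq α] : Levenshtein.Cost α α ℕ where
  delete _ := 1
  insert _ := 1
  substitute a b := if a = b then 0 else 1

/-- One step of the dynamic program for the Levenshtein distance. -/
def Levenshtein.impl {α β δ : Type*} [AddZeroClass δ] [Min δ] (C : Levenshtein.Cost α β δ)
    (xs : List α) (y : β) (d : {r : List δ // 0 < r.length}) : {r : List δ // 0 < r.length} :=
  let ⟨ds, w⟩ := d
  xs.zip (ds.zip ds.tail) |>.foldr
    (init := ⟨[C.insert y + ds.getLast (List.length_pos_iff.mp w)], by simp⟩)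
    (fun ⟨x, d₀, d₁⟩ ⟨r, w⟩ =>
      ⟨min (C.delete x + r[0]) (min (C.insert y + d₀) (C.substitute x y + d₁)) :: r, by simp⟩)

/-- Levenshtein distances of all suffixes of `xs` to `ys`. -/
def suffixLevenshtein {α β δ : Type*} [AddZeroClass δ] [Min δ] (C : Levenshtein.Cost α β δ)
    (xs : List α) (ys : List β) : {r : List δ // 0 < r.length} :=
  ys.foldr
    (Levenshtein.impl C xs)
    (xs.foldr (init := ⟨[0], by simp⟩) (fun a ⟨r, w⟩ => ⟨(C.delete a + r[0]) :: r, by simp⟩))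

/-- The Levenshtein edit distance (as in the removed Mathlib `levenshtein`). -/
def levenshtein {α β δ : Type*} [AddZeroClass δ] [Min δ] (C : Levenshtein.Cost α β δ)
    (xs : List α) (ys : List β) : δ :=
  let ⟨r, _⟩ := suffixLevenshtein C xs ys
  r[0]

/-!
An alignment of cost at most `C` keeps all but at most `C` letters, so it splits the first word
into at most `C + 1` runs of kept letters, each a common factor of both words. For `k ∈ I` large,
`x ++ u^k ++ y` is long while `C` is fixed, so some common factor `m` is long. Its window of length
`|u|` starting at offset `|x| + |x'|` lies inside `u^k` in the first word and inside `v^k` in the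
second (once `|u| = |v|`, which the length bound forces), hence is a rotation of both `u` and `v`.
-/

section Recursion

variable {α β δ : Type*} [AddZeroClass δ] [Min δ] (C : Levenshtein.Cost α β δ)

theorem Levenshtein.impl_length (xs : List α) (y : β) (d : {r : List δ // 0 < r.length})
    (w : d.1.length = xs.length + 1) :
    (Levenshtein.impl C xs y d).1.length = xs.length + 1 := by
  induction xs generalizing d with
  | nil => rfl
  | cons x xs ih =>
    match d, w with
    | ⟨_ :: d₂ :: ds, _⟩, w =>
      dsimp [Levenshtein.impl]
      congr 1
      exact ih ⟨d₂ :: ds, by simp⟩ (by simpa using w)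

theorem Levenshtein.impl_cons (x : α) (xs : List α) (y : β) (d : δ) (ds : List δ) (w)
    (w' : 0 < ds.length) :
    Levenshtein.impl C (x :: xs) y ⟨d :: ds, w⟩ =
      let ⟨r, w⟩ := Levenshtein.impl C xs y ⟨ds, w'⟩
      ⟨min (C.delete x + r[0]) (min (C.insert y + d) (C.substitute x y + ds[0])) :: r,
        by simp⟩ :=
  match ds, w' with | _ :: _, _ => rfl

theorem suffixLevenshtein_length (xs : List α) (ys : List β) :
    (suffixLevenshtein C xs ys).1.length = xs.length + 1 := by
  induction ys with
  | nil =>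
    induction xs with
    | nil => rfl
    | cons _ xs ih => simpa [suffixLevenshtein] using ih
  | cons y ys ih => exact Levenshtein.impl_length C xs y _ ih

theorem suffixLevenshtein_cons₂ (xs : List α) (y : β) (ys : List β) :
    suffixLevenshtein C xs (y :: ys) = Levenshtein.impl C xs y (suffixLevenshtein C xs ys) :=
  rfl

theorem suffixLevenshtein_cons₁ (x : α) (xs : List α) (ys : List β) :
    suffixLevenshtein C (x :: xs) ys =
      ⟨levenshtein C (x :: xs) ys :: (suffixLevenshtein C xs ys).1, by simp⟩ := by
  induction ys with
  | nil => rfl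
  | cons y ys ih =>
    apply Subtype.ext
    rw [← List.cons_head_tail (List.ne_nil_of_length_pos (suffixLevenshtein C _ _).2)]
    congr 1
    · exact List.head_eq_getElem _
    · change (Levenshtein.impl C (x :: xs) y (suffixLevenshtein C (x :: xs) ys)).1.tail = _
      rw [ih, Levenshtein.impl_cons (w' := by simp [suffixLevenshtein_length])]
      rfl

theorem levenshtein_nil_cons (y : β) (ys : List β) :
    levenshtein C [] (y :: ys) = C.insert y + levenshtein C [] ys := by
  have hl := suffixLevenshtein_length C ([] : List α) ys
  unfold levenshtein
  rw [suffixLevenshtein_cons₂]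
  generalize suffixLevenshtein C [] ys = d at hl ⊢
  match d, hl with
  | ⟨[d], _⟩, _ => rfl

theorem levenshtein_cons_nil (x : α) (xs : List α) :
    levenshtein C (x :: xs) ([] : List β) = C.delete x + levenshtein C xs ([] : List β) :=
  rfl

theorem levenshtein_cons_cons (x : α) (xs : List α) (y : β) (ys : List β) :
    levenshtein C (x :: xs) (y :: ys) =
      min (C.delete x + levenshtein C xs (y :: ys))
        (min (C.insert y + levenshtein C (x :: xs) ys)
          (C.substitute x y + levenshtein C xs ys)) := by
  have h : (suffixLevenshtein C (x :: xs) (y :: ys)).1 =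
      min (C.delete x + levenshtein C xs (y :: ys))
        (min (C.insert y + levenshtein C (x :: xs) ys)
          (C.substitute x y + levenshtein C xs ys)) :: (suffixLevenshtein C xs (y :: ys)).1 := by
    rw [suffixLevenshtein_cons₂, suffixLevenshtein_cons₁,
      Levenshtein.impl_cons (w' := by simp [suffixLevenshtein_length])]
    rfl
  exact List.getElem_of_eq h (suffixLevenshtein C _ _).2

end Recursion

namespace Levenshtein

variable {α : Type*}

inductive Aligned : List α → List α → ℕ → Prop
  | nil : Aligned [] [] 0
  | keep (x : α) {s t : List α} {n : ℕ} : Aligned s t n → Aligned (x :: s) (x :: t) n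
  | substitute (x y : α) {s t : List α} {n : ℕ} :
      Aligned s t n → Aligned (x :: s) (y :: t) (n + 1)
  | delete (x : α) {s t : List α} {n : ℕ} : Aligned s t n → Aligned (x :: s) t (n + 1)
  | insert (y : α) {s t : List α} {n : ℕ} : Aligned s t n → Aligned s (y :: t) (n + 1)

namespace Aligned

variable {a b : List α} {n : ℕ}

theorem min {m : ℕ} (hm : Aligned a b m) (hn : Aligned a b n) : Aligned a b (min m n) := by
  rcases min_choice m n with h | h <;> rw [h] <;> assumption

theorem symm (h : Aligned a b n) : Aligned b a n := by
  induction h with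
  | nil => exact nil
  | keep x _ ih => exact ih.keep x
  | substitute x y _ ih => exact ih.substitute y x
  | delete x _ ih => exact ih.insert x
  | insert y _ ih => exact ih.delete y

theorem length_le (h : Aligned a b n) : a.length ≤ b.length + n := by
  induction h <;> simp only [List.length_cons, List.length_nil] at * <;> omega

/-- `p` is the leading run of kept letters and `m` a longest run found so far; an edit ends the
run `p`, whose length is then dominated by `|m|`. -/
theorem exists_prefix_infix (h : Aligned a b n) :
    ∃ p m : List α, p <+: a ∧ p <+: b ∧ m <:+: a ∧ m <:+: b ∧ p.length ≤ m.length ∧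
      a.length ≤ p.length + n * (m.length + 1) := by
  induction h with
  | nil => exact ⟨[], [], by simp⟩
  | @keep x s t n _ ih =>
    obtain ⟨p, m, hps, hpt, hms, hmt, hpm, hs⟩ := ih
    have hps' := (List.prefix_cons_inj x).2 hps
    have hpt' := (List.prefix_cons_inj x).2 hpt
    rcases Nat.lt_or_ge p.length m.length with hlt | hge
    · refine ⟨x :: p, m, hps', hpt', List.infix_cons hms, List.infix_cons hmt, hlt, ?_⟩
      simp only [List.length_cons]
      omega
    · refine ⟨x :: p, x :: p, hps', hpt', hps'.isInfix, hpt'.isInfix, le_rfl, ?_⟩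
      simp only [List.length_cons]
      nlinarith
  | substitute x y _ ih =>
    obtain ⟨p, m, -, -, hms, hmt, hpm, hs⟩ := ih
    refine ⟨[], m, List.nil_prefix, List.nil_prefix, List.infix_cons hms, List.infix_cons hmt,
      Nat.zero_le _, ?_⟩
    simp only [List.length_cons, List.length_nil]
    nlinarith
  | delete x _ ih =>
    obtain ⟨p, m, -, -, hms, hmt, hpm, hs⟩ := ih
    refine ⟨[], m, List.nil_prefix, List.nil_prefix, List.infix_cons hms, hmt, Nat.zero_le _, ?_⟩
    simp only [List.length_cons, List.length_nil]
    nlinarith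
  | insert y _ ih =>
    obtain ⟨p, m, -, -, hms, hmt, hpm, hs⟩ := ih
    refine ⟨[], m, List.nil_prefix, List.nil_prefix, hms, List.infix_cons hmt, Nat.zero_le _, ?_⟩
    simp only [List.length_nil]
    nlinarith

theorem exists_infix_length_le (h : Aligned a b n) :
    ∃ m : List α, m <:+: a ∧ m <:+: b ∧ a.length ≤ m.length + n * (m.length + 1) := by
  obtain ⟨p, m, -, -, hma, hmb, hpm, ha⟩ := h.exists_prefix_infix
  exact ⟨m, hma, hmb, by omega⟩

end Aligned

theorem aligned_levenshtein [DecidableEq α] (a b : List α) :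
    Aligned a b (levenshtein defaultCost a b) := by
  induction a generalizing b with
  | nil =>
    induction b with
    | nil => exact .nil
    | cons y ys ih =>
      rw [levenshtein_nil_cons, add_comm]
      exact ih.insert y
  | cons x xs ihx =>
    induction b with
    | nil =>
      rw [levenshtein_cons_nil, add_comm]
      exact (ihx []).delete x
    | cons y ys ihy =>
      rw [levenshtein_cons_cons]
      refine .min ?_ (.min ?_ ?_)
      · rw [add_comm]
        exact (ihx _).delete x
      · rw [add_comm]
        exact ihy.insert y
      · by_cases hxy : x = y
        · subst hxy
          simpa [defaultCost] using (ihx ys).keep x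
        · simpa [defaultCost, hxy, add_comm] using (ihx ys).substitute x y

end Levenshtein

section

open Levenshtein

variable {α : Type*} [DecidableEq α]

theorem length_le_of_levenshtein_le {a b : List α} {c : ℕ} (h : levenshtein defaultCost a b ≤ c) :
    a.length ≤ b.length + c ∧ b.length ≤ a.length + c :=
  ⟨by linarith [(aligned_levenshtein a b).length_le],
    by linarith [(aligned_levenshtein a b).symm.length_le]⟩

theorem exists_infix_of_levenshtein_le {a b : List α} {c : ℕ}
    (h : levenshtein defaultCost a b ≤ c) :
    ∃ m : List α, m <:+: a ∧ m <:+: b ∧ a.length ≤ m.length + c * (m.length + 1) := by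
  obtain ⟨m, hma, hmb, ha⟩ := (aligned_levenshtein a b).exists_infix_length_le
  exact ⟨m, hma, hmb, ha.trans (by gcongr)⟩

end

section Words

variable {α : Type*}

theorem wpow_succ (u : List α) (k : ℕ) : wpow u (k + 1) = u ++ wpow u k := by
  simp [wpow, List.replicate_succ]

theorem length_wpow (u : List α) (k : ℕ) : (wpow u k).length = k * u.length := by
  simp [wpow]

theorem getElem_wpow (u : List α) (k j : ℕ) (h : j < (wpow u k).length) :
    (wpow u k)[j] = u[j % u.length]'(Nat.mod_lt _ (by
      rw [length_wpow] at h
      exact Nat.pos_of_ne_zero fun h0 => by simp [h0] at h)) := by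
  induction k generalizing j with
  | zero => simp [length_wpow] at h
  | succ k ih =>
    simp only [wpow_succ, List.getElem_append]
    split_ifs with hj
    · simp [Nat.mod_eq_of_lt hj]
    · simp only [ih, ← Nat.mod_eq_sub_mod (Nat.le_of_not_lt hj)]

theorem take_drop_wpow {u : List α} {k i : ℕ} (h : i + u.length ≤ k * u.length) :
    ((wpow u k).drop i).take u.length = u.rotate i := by
  apply List.ext_getElem
  · simp only [List.length_take, List.length_drop, length_wpow, List.length_rotate, inf_eq_left]
    omega
  · intro j hj _
    simp only [List.getElem_take, List.getElem_drop, getElem_wpow, List.getElem_rotate]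
    congr 2
    omega

theorem take_drop_append_append {X W Y : List α} {i L : ℕ} (hi : X.length ≤ i)
    (hL : i + L ≤ X.length + W.length) :
    ((X ++ W ++ Y).drop i).take L = (W.drop (i - X.length)).take L := by
  obtain ⟨d, rfl⟩ := Nat.exists_eq_add_of_le hi
  rw [List.append_assoc, List.drop_length_add_append, Nat.add_sub_cancel_left,
    List.drop_append_of_le_length (by omega),
    List.take_append_of_le_length (by rw [List.length_drop]; omega)]

theorem take_drop_eq_rotate_of_eq_append_wpow {p m s x u y : List α} {k D : ℕ}
    (h : p ++ m ++ s = x ++ wpow u k ++ y) (hx : x.length ≤ D)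
    (hm : D + u.length + y.length ≤ m.length) :
    (m.drop D).take u.length = u.rotate (p.length + D - x.length) := by
  have hlen := congrArg List.length h
  simp only [List.length_append, length_wpow] at hlen
  calc (m.drop D).take u.length
      = ((p ++ m ++ s).drop (p.length + D)).take u.length := by
        rw [take_drop_append_append (by omega) (by omega), Nat.add_sub_cancel_left]
    _ = ((wpow u k).drop (p.length + D - x.length)).take u.length := by
        rw [h, take_drop_append_append (by omega) (by rw [length_wpow]; omega)]
    _ = u.rotate (p.length + D - x.length) := take_drop_wpow (by omega)

theorem isRotated_of_long_common_infix {x y x' y' u v m : List α} {k : ℕ}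
    (hlen : u.length = v.length) (hu : m <:+: x ++ wpow u k ++ y)
    (hv : m <:+: x' ++ wpow v k ++ y')
    (hm : x.length + x'.length + u.length + y.length + y'.length ≤ m.length) : u ~r v := by
  obtain ⟨p, s, hps⟩ := hu
  obtain ⟨p', s', hps'⟩ := hv
  have hwu := take_drop_eq_rotate_of_eq_append_wpow hps (D := x.length + x'.length)
    (by omega) (by omega)
  have hwv := take_drop_eq_rotate_of_eq_append_wpow hps' (D := x.length + x'.length)
    (by omega) (by omega)
  rw [← hlen, hwu] at hwv
  exact (List.IsRotated.forall u _).symm.trans (hwv ▸ List.IsRotated.forall v _)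

end Words

theorem le_of_mul_le_mul_add {a b c k : ℕ} (hk : c < k) (h : k * a ≤ k * b + c) : a ≤ b := by
  by_contra! hab
  have : k * (b + 1) ≤ k * a := Nat.mul_le_mul_left k hab
  rw [Nat.mul_succ] at this
  omega

theorem stmt_1 {α : Type*} [DecidableEq α] (x y x' y' u v : List α) (C : ℕ) (I : Set ℕ)
    (hI : I.Infinite)
    (h : ∀ k ∈ I,
      levenshtein Levenshtein.defaultCost (x ++ wpow u k ++ y) (x' ++ wpow v k ++ y') ≤ C) :
    List.IsRotated u v := by
  obtain ⟨N, hN⟩ : ∃ N, N = x.length + x'.length + u.length + y.length + y'.length := ⟨_, rfl⟩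
  obtain ⟨k, hkI, hk⟩ := hI.exists_gt ((C + 1) * (N + 1))
  have hkN : C + N < k := by nlinarith
  obtain ⟨hxy, hxy'⟩ := length_le_of_levenshtein_le (h k hkI)
  simp only [List.length_append, length_wpow] at hxy hxy'
  have hlen : u.length = v.length :=
    le_antisymm (le_of_mul_le_mul_add hkN (by omega))
      (le_of_mul_le_mul_add hkN (by omega))
  rcases eq_or_ne u [] with rfl | hu
  · rw [List.eq_nil_of_length_eq_zero hlen.symm]
  obtain ⟨m, hmu, hmv, hm⟩ := exists_infix_of_levenshtein_le (h k hkI)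
  refine isRotated_of_long_common_infix hlen hmu hmv ?_
  by_contra! hmN
  have : k ≤ k * u.length := Nat.le_mul_of_pos_right k (List.length_pos_iff.2 hu)
  have hCm : C * (m.length + 1) ≤ C * N := Nat.mul_le_mul_left C (by omega)
  simp only [List.length_append, length_wpow] at hm
  nlinarith
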